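/- arXiv:1804.07055 — 7 statements merged into one kernel-verified Lean document; each statement's English description precedes it below -/
import Mathlib

section
/- Let G be a finite simple graph on vertex set [m] with weights r : [m] → (0,1]. Suppose I(G[S], r) > 0 for every proper subset S ⊊ [m]. Then for all subsets S ⊆ S' ⊆ [m], we have I(G[S], r) ≥ I(G[S'], r); in particular I(G[S], r) ≤ 1 for every S ⊆ [m]. -/
open Finset

/-- The multivariate independence polynomial of the induced subgraph of `G` on `T`. -/
def indPoly {m : ℕ} (G : SimpleGraph (Fin m)) [DecidableRel G.Adj]
    (x : Fin m → ℝ) (T : Finset (Fin m)) : ℝ :=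
  ∑ S ∈ T.powerset.filter (fun S => ∀ u ∈ S, ∀ v ∈ S, ¬ G.Adj u v),
    (-1 : ℝ) ^ S.card * ∏ v ∈ S, x v

private def indTerm {m : ℕ} (G : SimpleGraph (Fin m)) [DecidableRel G.Adj]
    (x : Fin m → ℝ) (S : Finset (Fin m)) : ℝ :=
  if ∀ u ∈ S, ∀ v ∈ S, ¬ G.Adj u v then (-1 : ℝ) ^ S.card * ∏ v ∈ S, x v else 0

private lemma indPoly_eq_sum {m : ℕ} (G : SimpleGraph (Fin m)) [DecidableRel G.Adj]
    (x : Fin m → ℝ) (T : Finset (Fin m)) :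
    indPoly G x T = ∑ S ∈ T.powerset, indTerm G x S := by
  rw [indPoly, sum_filter]; rfl

private lemma key {m : ℕ} (G : SimpleGraph (Fin m)) [DecidableRel G.Adj]
    (x : Fin m → ℝ) (v : Fin m) (S : Finset (Fin m)) (hv : v ∉ S) :
    indPoly G x (insert v S) =
      indPoly G x S - x v * indPoly G x (S.filter (fun u => ¬ G.Adj v u)) := by
  rw [indPoly_eq_sum, indPoly_eq_sum, indPoly_eq_sum, sum_powerset_insert hv]
  have h1 : ∑ t ∈ S.powerset, indTerm G x (insert v t)
      = ∑ t ∈ (S.filter (fun u => ¬ G.Adj v u)).powerset, indTerm G x (insert v t) := by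
    refine (sum_subset (powerset_mono.2 (filter_subset _ _)) ?_).symm
    intro t ht hnt
    simp only [mem_powerset] at ht hnt
    have : ∃ u ∈ t, G.Adj v u := by
      by_contra h
      push_neg at h
      exact hnt fun u hu => mem_filter.2 ⟨ht hu, h u hu⟩
    obtain ⟨u, hu, hadj⟩ := this
    have : ¬ (∀ a ∈ insert v t, ∀ b ∈ insert v t, ¬ G.Adj a b) := by
      intro h
      exact h v (mem_insert_self _ _) u (mem_insert_of_mem hu) hadj
    simp only [indTerm, if_neg this]
  rw [h1]
  have h2 : ∀ t ∈ (S.filter (fun u => ¬ G.Adj v u)).powerset,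
      indTerm G x (insert v t) = -(x v * indTerm G x t) := by
    intro t ht
    simp only [mem_powerset] at ht
    have hvt : v ∉ t := fun h => hv (mem_filter.1 (ht h)).1
    have hiff : (∀ a ∈ insert v t, ∀ b ∈ insert v t, ¬ G.Adj a b)
        ↔ (∀ a ∈ t, ∀ b ∈ t, ¬ G.Adj a b) := by
      constructor
      · intro h a ha b hb
        exact h a (mem_insert_of_mem ha) b (mem_insert_of_mem hb)
      · intro h a ha b hb
        rcases mem_insert.1 ha with rfl | ha' <;> rcases mem_insert.1 hb with rfl | hb'
        · exact G.irrefl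
        · exact (mem_filter.1 (ht hb')).2
        · intro hadj; exact (mem_filter.1 (ht ha')).2 hadj.symm
        · exact h a ha' b hb'
    simp only [indTerm, hiff, card_insert_of_notMem hvt, prod_insert hvt]
    split
    · ring
    · ring
  rw [sum_congr rfl h2, Finset.sum_neg_distrib, ← Finset.mul_sum]
  ring

private lemma step {m : ℕ} (G : SimpleGraph (Fin m)) [DecidableRel G.Adj]
    (r : Fin m → ℝ) (h01 : ∀ i, 0 < r i ∧ r i ≤ 1)
    (hpos : ∀ S : Finset (Fin m), S ⊂ Finset.univ → 0 < indPoly G r S)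
    (v : Fin m) (S : Finset (Fin m)) (hv : v ∉ S) :
    indPoly G r (insert v S) ≤ indPoly G r S := by
  rw [key G r v S hv]
  have h1 : (S.filter (fun u => ¬ G.Adj v u)) ⊂ Finset.univ := by
    refine Finset.ssubset_univ_iff.2 ?_
    intro h
    have : v ∈ S.filter (fun u => ¬ G.Adj v u) := h ▸ Finset.mem_univ v
    exact hv (mem_filter.1 this).1
  have h2 := hpos _ h1
  nlinarith [(h01 v).1]

theorem indPoly_antitone_and_le_one {m : ℕ} (G : SimpleGraph (Fin m)) [DecidableRel G.Adj]
    (r : Fin m → ℝ) (h01 : ∀ i, 0 < r i ∧ r i ≤ 1)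
    (hpos : ∀ S : Finset (Fin m), S ⊂ Finset.univ → 0 < indPoly G r S) :
    (∀ S S' : Finset (Fin m), S ⊆ S' → indPoly G r S' ≤ indPoly G r S) ∧
      (∀ S : Finset (Fin m), indPoly G r S ≤ 1) := by
  have main : ∀ n : ℕ, ∀ S S' : Finset (Fin m), S ⊆ S' → (S' \ S).card = n →
      indPoly G r S' ≤ indPoly G r S := by
    intro n
    induction n with
    | zero =>
      intro S S' hss hcard
      have : S' \ S = ∅ := Finset.card_eq_zero.1 hcard
      have : S' = S := Finset.Subset.antisymm
        (fun x hx => by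
          by_contra hxS
          have : x ∈ S' \ S := Finset.mem_sdiff.2 ⟨hx, hxS⟩
          simp [‹S' \ S = ∅›] at this) hss
      rw [this]
    | succ n ih =>
      intro S S' hss hcard
      have hne : (S' \ S).Nonempty := Finset.card_pos.1 (by omega)
      obtain ⟨v, hv⟩ := hne
      have hvS' : v ∈ S' := (Finset.mem_sdiff.1 hv).1
      have hvS : v ∉ S := (Finset.mem_sdiff.1 hv).2
      have h1 : insert v S ⊆ S' := Finset.insert_subset hvS' hss
      have h2 : (S' \ insert v S).card = n := by
        have : S' \ insert v S = (S' \ S).erase v := by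
          ext x
          simp [Finset.mem_sdiff, Finset.mem_erase, Finset.mem_insert]
          tauto
        rw [this, Finset.card_erase_of_mem hv, hcard]
        omega
      calc indPoly G r S' ≤ indPoly G r (insert v S) := ih _ _ h1 h2
        _ ≤ indPoly G r S := step G r h01 hpos v S hvS
  constructor
  · intro S S' h; exact main _ S S' h rfl
  · intro S
    have := main _ ∅ S (Finset.empty_subset S) rfl
    have hempty : indPoly G r ∅ = 1 := by
      simp [indPoly, Finset.filter_singleton]
    linarith
end

section
/- Let G be a finite simple graph on vertex set [m] with weights r : [m] → (0,1]. If I(G[S], r) > 0 for every proper subset S ⊊ [m] and I(G, r) ≤ 0, then G is connected. -/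
open Finset

lemma indPoly_union {m : ℕ} (G : SimpleGraph (Fin m)) [DecidableRel G.Adj]
    (x : Fin m → ℝ) (A B : Finset (Fin m)) (hd : Disjoint A B)
    (hcross : ∀ a ∈ A, ∀ b ∈ B, ¬ G.Adj a b) :
    indPoly G x (A ∪ B) = indPoly G x A * indPoly G x B := by
  unfold indPoly
  rw [Finset.sum_mul_sum, ← Finset.sum_product']
  refine Finset.sum_nbij' (fun S => (S ∩ A, S ∩ B)) (fun p => p.1 ∪ p.2) ?_ ?_ ?_ ?_ ?_
  · intro S hS
    simp only [Finset.mem_filter, Finset.mem_powerset] at hS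
    simp only [Finset.mem_product, Finset.mem_filter, Finset.mem_powerset]
    exact ⟨⟨Finset.inter_subset_right, fun u hu v hv =>
        hS.2 u (Finset.mem_of_mem_inter_left hu) v (Finset.mem_of_mem_inter_left hv)⟩,
      ⟨Finset.inter_subset_right, fun u hu v hv =>
        hS.2 u (Finset.mem_of_mem_inter_left hu) v (Finset.mem_of_mem_inter_left hv)⟩⟩
  · intro p hp
    simp only [Finset.mem_product, Finset.mem_filter, Finset.mem_powerset] at hp
    simp only [Finset.mem_filter, Finset.mem_powerset]
    refine ⟨Finset.union_subset_union hp.1.1 hp.2.1, ?_⟩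
    intro u hu v hv
    rcases Finset.mem_union.1 hu with hu1 | hu2 <;> rcases Finset.mem_union.1 hv with hv1 | hv2
    · exact hp.1.2 u hu1 v hv1
    · exact hcross u (hp.1.1 hu1) v (hp.2.1 hv2)
    · intro h; exact hcross v (hp.1.1 hv1) u (hp.2.1 hu2) h.symm
    · exact hp.2.2 u hu2 v hv2
  · intro S hS
    simp only [Finset.mem_filter, Finset.mem_powerset] at hS
    show S ∩ A ∪ S ∩ B = S
    rw [← Finset.inter_union_distrib_left, Finset.inter_eq_left.2 hS.1]
  · intro p hp
    simp only [Finset.mem_product, Finset.mem_filter, Finset.mem_powerset] at hp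
    have h1 : (p.1 ∪ p.2) ∩ A = p.1 := by
      ext w
      simp only [Finset.mem_inter, Finset.mem_union]
      constructor
      · rintro ⟨h | h, hwA⟩
        · exact h
        · exact absurd (hp.2.1 h) (Finset.disjoint_left.1 hd hwA)
      · intro h; exact ⟨Or.inl h, hp.1.1 h⟩
    have h2 : (p.1 ∪ p.2) ∩ B = p.2 := by
      ext w
      simp only [Finset.mem_inter, Finset.mem_union]
      constructor
      · rintro ⟨h | h, hwB⟩
        · exact absurd (hp.1.1 h) (Finset.disjoint_right.1 hd hwB)
        · exact h
      · intro h; exact ⟨Or.inr h, hp.2.1 h⟩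
    simp [h1, h2]
  · intro S hS
    simp only [Finset.mem_filter, Finset.mem_powerset] at hS
    have hSd : Disjoint (S ∩ A) (S ∩ B) := hd.mono Finset.inter_subset_right Finset.inter_subset_right
    have hSu : (S ∩ A) ∪ (S ∩ B) = S := by
      rw [← Finset.inter_union_distrib_left, Finset.inter_eq_left.2 hS.1]
    calc (-1 : ℝ) ^ S.card * ∏ v ∈ S, x v
        = (-1 : ℝ) ^ ((S ∩ A) ∪ (S ∩ B)).card * ∏ v ∈ (S ∩ A) ∪ (S ∩ B), x v := by rw [hSu]
      _ = _ := by
          rw [Finset.card_union_of_disjoint hSd, Finset.prod_union hSd, pow_add]; ring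

theorem connected_of_indPoly_nonpos {m : ℕ} (G : SimpleGraph (Fin m)) [DecidableRel G.Adj]
    (r : Fin m → ℝ) (h01 : ∀ i, 0 < r i ∧ r i ≤ 1)
    (hpos : ∀ S : Finset (Fin m), S ⊂ Finset.univ → 0 < indPoly G r S)
    (hI : indPoly G r Finset.univ ≤ 0) :
    G.Connected := by
  classical
  have hone : indPoly G r (∅ : Finset (Fin m)) = 1 := by
    unfold indPoly
    rw [Finset.powerset_empty, Finset.filter_singleton]
    simp
  rcases Nat.eq_zero_or_pos m with hm | hm
  · exfalso
    have : (Finset.univ : Finset (Fin m)) = ∅ := by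
      subst hm; rfl
    rw [this, hone] at hI; linarith
  have hne : Nonempty (Fin m) := ⟨⟨0, hm⟩⟩
  rw [SimpleGraph.connected_iff]
  refine ⟨?_, hne⟩
  by_contra hpc
  simp only [SimpleGraph.Preconnected, not_forall] at hpc
  obtain ⟨u, v, huv⟩ := hpc
  set A : Finset (Fin m) := Finset.univ.filter (fun w => G.Reachable u w) with hA
  set B : Finset (Fin m) := Aᶜ with hB
  have huA : u ∈ A := Finset.mem_filter.2 ⟨Finset.mem_univ u, SimpleGraph.Reachable.refl u⟩
  have hvB : v ∈ B := by simp [hB, hA, huv]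
  have hd : Disjoint A B := disjoint_compl_right
  have hcross : ∀ a ∈ A, ∀ b ∈ B, ¬ G.Adj a b := by
    intro a ha b hb hab
    simp only [hA, Finset.mem_filter, Finset.mem_univ, true_and] at ha
    simp only [hB, hA, Finset.mem_compl, Finset.mem_filter, Finset.mem_univ, true_and] at hb
    exact hb (ha.trans hab.reachable)
  have hAB : A ∪ B = Finset.univ := Finset.union_compl A
  have hApos : 0 < indPoly G r A := hpos A ⟨Finset.subset_univ A, fun h => by
    have := h (Finset.mem_univ v); rw [hB] at hvB; simp at hvB; exact hvB this⟩
  have hBpos : 0 < indPoly G r B := hpos B ⟨Finset.subset_univ B, fun h => by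
    have := h (Finset.mem_univ u); rw [hB] at this; simp at this; exact this huA⟩
  have := indPoly_union G r A B hd hcross
  rw [hAB] at this
  rw [this] at hI
  nlinarith
end

section
/- Let G = ([m], E) be a graph and A_1, …, A_m events in a probability space such that G is a dependency graph (each A_i is independent of the collection {A_j : j ∉ Γ_i ∪ {i}}). Suppose B_1, …, B_m is another event set with dependency graph G, Pr(A_i) = Pr(B_i) for all i, and the B_i are exclusive, i.e., Pr(B_i ∩ B_j) = 0 whenever (i,j) ∈ E. Then Pr(⋃_i A_i) ≤ Pr(⋃_i B_i). -/
open MeasureTheory ProbabilityTheory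

/-- `G` is a dependency graph for the events `A`: each `A i` is independent of the
collection of events indexed by non-neighbors of `i` (other than `i` itself). -/
def IsDependencyGraph {Ω : Type*} [MeasurableSpace Ω] (μ : Measure Ω)
    {m : ℕ} (G : SimpleGraph (Fin m)) (A : Fin m → Set Ω) : Prop :=
  ∀ i, Indep (MeasurableSpace.generateFrom {A i})
    (MeasurableSpace.generateFrom ((fun j => A j) '' {j | j ≠ i ∧ ¬ G.Adj i j})) μ

/-! Write `a T` for the probability that no `A j` with `j ∈ T` occurs, `b T` likewise, and
`p i = P(A i) = P(B i)`. Splitting on `A i`, then discarding the neighbours of `i` from `T`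
(which can only enlarge the event) and using independence, gives
`a T ≤ a (T ∪ {i}) + p i * a (T \ Γ i)`. For exclusive events `B i` already excludes its
neighbours up to a null set, so the same recursion holds for `b` with equality. Shearer's
induction on `T` then yields `a M / b M ≤ a T / b T` for `M ⊆ T` (stated cross-multiplied, so
that no division by zero occurs); `M = ∅`, `T = univ` gives `P(no A i) ≥ P(no B i)`. -/

lemma cross_mul_le_trans {aM aT₀ aT bM bT₀ bT : ℝ} (haT : 0 ≤ aT) (hbM : 0 ≤ bM)
    (hbT : 0 ≤ bT) (hbT₀ : bT ≤ bT₀) (h₁ : bT₀ * aM ≤ bM * aT₀) (h₂ : bT * aT₀ ≤ bT₀ * aT) :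
    bT * aM ≤ bM * aT := by
  rcases (hbT.trans hbT₀).eq_or_lt with h0 | h0
  · rw [le_antisymm (h0 ▸ hbT₀) hbT, zero_mul]
    positivity
  · refine le_of_mul_le_mul_left ?_ h0
    calc bT₀ * (bT * aM) = bT * (bT₀ * aM) := by ring
      _ ≤ bT * (bM * aT₀) := by gcongr
      _ = bM * (bT * aT₀) := by ring
      _ ≤ bM * (bT₀ * aT) := by gcongr
      _ = bT₀ * (bM * aT) := by ring

theorem cross_mul_le_of_subset {ι : Type*} [DecidableEq ι] (G : SimpleGraph ι)
    [DecidableRel G.Adj] (a b : Finset ι → ℝ) (p : ι → ℝ)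
    (hp : ∀ i, 0 ≤ p i) (ha : ∀ T, 0 ≤ a T) (hb : ∀ T, 0 ≤ b T)
    (hA : ∀ T i, i ∉ T → a T ≤ a (insert i T) + p i * a (T.filter (¬ G.Adj i ·)))
    (hB : ∀ T i, i ∉ T → b T = b (insert i T) + p i * b (T.filter (¬ G.Adj i ·)))
    {M T : Finset ι} (hMT : M ⊆ T) : b T * a M ≤ b M * a T := by
  induction T using Finset.strongInduction generalizing M with
  | H T ih =>
  rcases hMT.eq_or_ssubset with rfl | hMT
  · exact le_rfl
  obtain ⟨i, hiT, hiM⟩ := Finset.exists_of_ssubset hMT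
  obtain ⟨T₀, hiT₀, rfl⟩ : ∃ T₀, i ∉ T₀ ∧ insert i T₀ = T :=
    ⟨T.erase i, T.notMem_erase i, T.insert_erase hiT⟩
  have hT₀ : T₀ ⊂ insert i T₀ := Finset.ssubset_insert hiT₀
  have hAi := hA T₀ i hiT₀
  have hBi := hB T₀ i hiT₀
  set N := T₀.filter (¬ G.Adj i ·)
  have hNT₀ : b T₀ * a N ≤ b N * a T₀ := ih T₀ hT₀ (Finset.filter_subset _ _)
  have step : b (insert i T₀) * a T₀ ≤ b T₀ * a (insert i T₀) :=
    calc b (insert i T₀) * a T₀ = b T₀ * a T₀ - p i * (b N * a T₀) := by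
          linear_combination (-a T₀) * hBi
      _ ≤ b T₀ * a T₀ - p i * (b T₀ * a N) := by gcongr; exact hp i
      _ = b T₀ * (a T₀ - p i * a N) := by ring
      _ ≤ b T₀ * a (insert i T₀) := by gcongr; exacts [hb T₀, by linarith]
  have hbT₀ : b (insert i T₀) ≤ b T₀ := by linarith [mul_nonneg (hp i) (hb N)]
  exact cross_mul_le_trans (ha _) (hb M) (hb _) hbT₀
    (ih T₀ hT₀ (Finset.subset_insert_iff_of_notMem hiM |>.1 hMT.subset)) step

section Events

variable {Ω ι : Type*}

def noneOf (A : ι → Set Ω) (T : Finset ι) : Set Ω := ⋂ j ∈ T, (A j)ᶜ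

variable {A : ι → Set Ω}

@[simp] lemma noneOf_empty : noneOf A ∅ = Set.univ := by simp [noneOf]

@[simp] lemma noneOf_univ [Fintype ι] : noneOf A Finset.univ = (⋃ i, A i)ᶜ := by
  simp [noneOf, Set.compl_iUnion]

lemma noneOf_insert [DecidableEq ι] (i : ι) (T : Finset ι) :
    noneOf A (insert i T) = noneOf A T \ A i := by
  rw [noneOf, Finset.set_biInter_insert, Set.sdiff_eq, Set.inter_comm]; rfl

lemma noneOf_anti {M T : Finset ι} (h : M ⊆ T) : noneOf A T ⊆ noneOf A M :=
  Set.biInter_subset_biInter_left h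

variable [MeasurableSpace Ω] (μ : Measure Ω) [IsFiniteMeasure μ]

lemma measureReal_noneOf_eq_insert_add [DecidableEq ι] {i : ι} (hAi : MeasurableSet (A i))
    (T : Finset ι) :
    μ.real (noneOf A T) = μ.real (noneOf A (insert i T)) + μ.real (A i ∩ noneOf A T) := by
  rw [noneOf_insert, Set.inter_comm, add_comm]
  exact (measureReal_inter_add_sdiff hAi).symm

lemma measureReal_inter_noneOf_filter_not_adj (G : SimpleGraph ι) [DecidableRel G.Adj]
    (i : ι) (hexcl : ∀ j, G.Adj i j → μ (A i ∩ A j) = 0) (T : Finset ι) :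
    μ.real (A i ∩ noneOf A (T.filter (¬ G.Adj i ·))) = μ.real (A i ∩ noneOf A T) := by
  refine (measureReal_eq_measureReal_of_null_sdiff
    (Set.inter_subset_inter_right _ (noneOf_anti (T.filter_subset _))) ?_).symm
  rw [measureReal_eq_zero_iff]
  refine measure_mono_null (t := ⋃ j ∈ T.filter (G.Adj i ·), A i ∩ A j) ?_
    ((measure_biUnion_null_iff (Finset.countable_toSet _)).2
      fun j hj => hexcl j (Finset.mem_filter.1 hj).2)
  rintro ω ⟨⟨hωi, hωN⟩, hωT⟩
  obtain ⟨j, hjT, hωj⟩ : ∃ j ∈ T, ω ∈ A j := by simpa [noneOf, hωi] using hωT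
  have hij : G.Adj i j := by_contra fun h =>
    Set.mem_iInter₂.1 hωN j (Finset.mem_filter.2 ⟨hjT, h⟩) hωj
  exact Set.mem_biUnion (Finset.mem_filter.2 ⟨hjT, hij⟩) ⟨hωi, hωj⟩

end Events

namespace IsDependencyGraph

variable {Ω : Type*} [MeasurableSpace Ω] {μ : Measure Ω} {m : ℕ} {G : SimpleGraph (Fin m)}
  [DecidableRel G.Adj] {A : Fin m → Set Ω}

lemma measureReal_inter_noneOf_filter (h : IsDependencyGraph μ G A) {i : Fin m}
    {T : Finset (Fin m)} (hiT : i ∉ T) :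
    μ.real (A i ∩ noneOf A (T.filter (¬ G.Adj i ·)))
      = μ.real (A i) * μ.real (noneOf A (T.filter (¬ G.Adj i ·))) := by
  simp only [measureReal_def, ← ENNReal.toReal_mul]
  refine congrArg _ ((Indep_iff _ _ μ).1 (h i) _ _
    (MeasurableSpace.measurableSet_generateFrom rfl) ?_)
  refine Finset.measurableSet_biInter _ fun j hj => .compl ?_
  obtain ⟨hjT, hij⟩ := Finset.mem_filter.1 hj
  exact MeasurableSpace.measurableSet_generateFrom
    (Set.mem_image_of_mem _ ⟨ne_of_mem_of_not_mem hjT hiT, hij⟩)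

variable [IsFiniteMeasure μ]

lemma measureReal_noneOf_le (h : IsDependencyGraph μ G A) {i : Fin m}
    (hAi : MeasurableSet (A i)) {T : Finset (Fin m)} (hiT : i ∉ T) :
    μ.real (noneOf A T) ≤ μ.real (noneOf A (insert i T))
      + μ.real (A i) * μ.real (noneOf A (T.filter (¬ G.Adj i ·))) := by
  rw [measureReal_noneOf_eq_insert_add μ hAi, ← h.measureReal_inter_noneOf_filter hiT]
  gcongr
  exacts [measure_ne_top _ _, noneOf_anti (T.filter_subset _)]

lemma measureReal_noneOf_eq_of_exclusive (h : IsDependencyGraph μ G A) {i : Fin m}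
    (hAi : MeasurableSet (A i)) (hexcl : ∀ j, G.Adj i j → μ (A i ∩ A j) = 0)
    {T : Finset (Fin m)} (hiT : i ∉ T) :
    μ.real (noneOf A T) = μ.real (noneOf A (insert i T))
      + μ.real (A i) * μ.real (noneOf A (T.filter (¬ G.Adj i ·))) := by
  rw [measureReal_noneOf_eq_insert_add μ hAi,
    ← measureReal_inter_noneOf_filter_not_adj μ G i hexcl, h.measureReal_inter_noneOf_filter hiT]

end IsDependencyGraph

theorem union_le_of_exclusive {Ω : Type*} [MeasurableSpace Ω] (μ : Measure Ω)
    [IsProbabilityMeasure μ] {m : ℕ} (G : SimpleGraph (Fin m))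
    (A B : Fin m → Set Ω)
    (hAm : ∀ i, MeasurableSet (A i)) (hBm : ∀ i, MeasurableSet (B i))
    (hAdep : IsDependencyGraph μ G A) (hBdep : IsDependencyGraph μ G B)
    (heq : ∀ i, μ (A i) = μ (B i))
    (hexcl : ∀ i j, G.Adj i j → μ (B i ∩ B j) = 0) :
    μ (⋃ i, A i) ≤ μ (⋃ i, B i) := by
  classical
  have key := cross_mul_le_of_subset G (fun T => μ.real (noneOf A T))
    (fun T => μ.real (noneOf B T)) (fun i => μ.real (A i))
    (fun _ => measureReal_nonneg) (fun _ => measureReal_nonneg) (fun _ => measureReal_nonneg)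
    (fun _ i hiT => hAdep.measureReal_noneOf_le (hAm i) hiT)
    (fun _ i hiT => by
      rw [show μ.real (A i) = μ.real (B i) from congrArg ENNReal.toReal (heq i)]
      exact hBdep.measureReal_noneOf_eq_of_exclusive (hBm i) (hexcl i) hiT)
    (Finset.empty_subset Finset.univ)
  simp only [noneOf_empty, noneOf_univ, probReal_univ, mul_one, one_mul,
    probReal_compl_eq_one_sub (MeasurableSet.iUnion hAm),
    probReal_compl_eq_one_sub (MeasurableSet.iUnion hBm)] at key
  rw [← ENNReal.toReal_le_toReal (measure_ne_top _ _) (measure_ne_top _ _)]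
  change μ.real _ ≤ μ.real _
  linarith
end

section
/- Let G = ([m], E_D) be a dependency graph and p ∈ (0,1)^m a probability vector beyond Shearer's bound (i.e., there exists an event set with dependency graph G and probabilities p whose union has probability 1). Then for any edge (i,j) ∈ E_D and any 0 ≤ q ≤ p_j, the vector p' = p − q·e_j + q·((1−p_i)/p_j)·e_i is also beyond Shearer's bound, i.e., there exists an event set B with dependency graph G, Pr(B_k) = p'_k for all k, and Pr(⋃_k B_k) = 1. -/
open MeasureTheory ProbabilityTheory

/-- A probability vector `p` is beyond Shearer's bound for `G`: there is a probability space and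
an event set with dependency graph `G`, probabilities `p`, whose union has probability 1. -/
def BeyondShearer {m : ℕ} (G : SimpleGraph (Fin m)) (p : Fin m → ℝ) : Prop :=
  ∃ (Ω : Type) (_ : MeasurableSpace Ω) (μ : Measure Ω), IsProbabilityMeasure μ ∧
    ∃ A : Fin m → Set Ω, (∀ i, MeasurableSet (A i)) ∧ IsDependencyGraph μ G A ∧
      (∀ i, μ (A i) = ENNReal.ofReal (p i)) ∧ μ (⋃ i, A i) = 1

open MeasureTheory ProbabilityTheory

section Aux

variable {Ω : Type*}

/-- σ-algebra of sets of `Ω × Bool` all of whose slices lie in `m`. -/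
def sliceAlg (m : MeasurableSpace Ω) : MeasurableSpace (Ω × Bool) where
  MeasurableSet' U := ∀ b, MeasurableSet[m] {ω | (ω, b) ∈ U}
  measurableSet_empty := fun b => by simpa using @MeasurableSet.empty Ω m
  measurableSet_compl := fun U hU b => by
    have : {ω | (ω, b) ∈ Uᶜ} = {ω | (ω, b) ∈ U}ᶜ := rfl
    rw [this]; exact (hU b).compl
  measurableSet_iUnion := fun f hf b => by
    have : {ω | (ω, b) ∈ ⋃ n, f n} = ⋃ n, {ω | (ω, b) ∈ f n} := by ext; simp
    rw [this]; exact MeasurableSet.iUnion (fun n => hf n b)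

lemma le_sliceAlg (m : MeasurableSpace Ω) :
    m.comap Prod.fst ⊔ (⊤ : MeasurableSpace Bool).comap Prod.snd ≤ sliceAlg m := by
  refine sup_le ?_ ?_
  · rintro U ⟨s, hs, rfl⟩ b
    exact hs
  · rintro U ⟨t, -, rfl⟩ b
    by_cases hb : b ∈ t
    · have : {ω : Ω | (ω, b) ∈ Prod.snd ⁻¹' t} = Set.univ := by ext; simp [hb]
      rw [this]; exact MeasurableSet.univ
    · have : {ω : Ω | (ω, b) ∈ Prod.snd ⁻¹' t} = ∅ := by ext; simp [hb]
      rw [this]; exact @MeasurableSet.empty Ω m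

lemma bool_decomp (U : Set (Ω × Bool)) :
    U = ({ω | (ω, false) ∈ U} ×ˢ {false}) ∪ ({ω | (ω, true) ∈ U} ×ˢ {true}) := by
  ext ⟨ω, b⟩; cases b <;> simp

lemma prod_calc {Ω : Type*} {mΩ : MeasurableSpace Ω} (μ : Measure Ω) (hμ : IsProbabilityMeasure μ)
    (ν : Measure Bool) (hν : IsProbabilityMeasure ν) (s uf ut : Set Ω)
    (hsm : MeasurableSet s) (hf : MeasurableSet uf) (ht : MeasurableSet ut)
    (hsf : μ (s ∩ uf) = μ s * μ uf) (hst : μ (s ∩ ut) = μ s * μ ut) :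
    μ.prod ν (Prod.fst ⁻¹' s ∩ (uf ×ˢ {false} ∪ ut ×ˢ {true}))
      = μ.prod ν (Prod.fst ⁻¹' s) * μ.prod ν (uf ×ˢ {false} ∪ ut ×ˢ {true}) := by
  have hdisj : ∀ a c : Set Ω,
      Disjoint (a ×ˢ ({false} : Set Bool)) (c ×ˢ ({true} : Set Bool)) := by
    intro a c
    rw [Set.disjoint_left]
    rintro ⟨ω, b⟩ h1 h2
    simp only [Set.mem_prod, Set.mem_singleton_iff] at h1 h2
    rw [h1.2] at h2; exact Bool.noConfusion h2.2
  have hint : Prod.fst ⁻¹' s ∩ (uf ×ˢ {false} ∪ ut ×ˢ {true})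
      = ((s ∩ uf) ×ˢ {false}) ∪ ((s ∩ ut) ×ˢ {true}) := by
    ext ⟨ω, b⟩; cases b <;> simp [Set.mem_prod, and_assoc] <;> tauto
  have e1 : μ.prod ν (Prod.fst ⁻¹' s) = μ s := by
    rw [← Set.prod_univ, Measure.prod_prod, hν.measure_univ, mul_one]
  have e2 : μ.prod ν (uf ×ˢ {false} ∪ ut ×ˢ {true}) = μ uf * ν {false} + μ ut * ν {true} := by
    rw [measure_union (hdisj _ _) (ht.prod (measurableSet_singleton true)),
      Measure.prod_prod, Measure.prod_prod]
  have e3 : μ.prod ν (Prod.fst ⁻¹' s ∩ (uf ×ˢ {false} ∪ ut ×ˢ {true}))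
      = μ (s ∩ uf) * ν {false} + μ (s ∩ ut) * ν {true} := by
    rw [hint, measure_union (hdisj _ _)
        ((hsm.inter ht).prod (measurableSet_singleton true)),
      Measure.prod_prod, Measure.prod_prod]
  rw [e1, e2, e3, hsf, hst]
  ring

lemma indep_lift {Ω : Type*} [mΩ : MeasurableSpace Ω] (μ : Measure Ω) [IsProbabilityMeasure μ]
    (ν : Measure Bool) [IsProbabilityMeasure ν] {m₁ m₂ : MeasurableSpace Ω}
    (h₁ : m₁ ≤ mΩ) (h₂ : m₂ ≤ mΩ) (h : Indep m₁ m₂ μ) :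
    Indep (m₁.comap Prod.fst)
      (m₂.comap Prod.fst ⊔ (⊤ : MeasurableSpace Bool).comap Prod.snd)
      (@Measure.prod Ω Bool mΩ Bool.instMeasurableSpace μ ν) := by
  rw [Indep_iff] at h ⊢
  rintro t1 t2 ⟨s, hs, rfl⟩ ht2
  have hsm : MeasurableSet[mΩ] s := h₁ _ hs
  have hsl : ∀ b, MeasurableSet[m₂] {ω | (ω, b) ∈ t2} := le_sliceAlg m₂ t2 ht2
  have ht2eq : t2 = {ω | (ω, false) ∈ t2} ×ˢ {false} ∪ {ω | (ω, true) ∈ t2} ×ˢ {true} :=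
    bool_decomp t2
  rw [ht2eq]
  exact prod_calc μ ‹_› ν ‹_› s _ _ hsm (h₂ _ (hsl false)) (h₂ _ (hsl true))
    (h s _ hs (hsl false)) (h s _ hs (hsl true))

end Aux

theorem probability_transfer {m : ℕ} (G : SimpleGraph (Fin m)) (p : Fin m → ℝ)
    (h01 : ∀ k, 0 < p k ∧ p k < 1) {i j : Fin m} (hij : G.Adj i j)
    {q : ℝ} (hq0 : 0 ≤ q) (hqp : q ≤ p j) (hbs : BeyondShearer G p) :
    BeyondShearer G
      (Function.update (Function.update p j (p j - q)) i (p i + q * (1 - p i) / p j)) := by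
  obtain ⟨Ω₀, mΩ₀, μ, hμ, A, hAm, hdep, hAp, hAu⟩ := hbs
  have hne : i ≠ j := G.ne_of_adj hij
  have hpj : 0 < p j := (h01 j).1
  set r : ℝ := q / p j with hr
  have hr0 : 0 ≤ r := div_nonneg hq0 hpj.le
  have hr1 : r ≤ 1 := (div_le_one hpj).2 hqp
  -- the auxiliary Bernoulli measure on Bool
  set ν : Measure Bool :=
    ENNReal.ofReal r • Measure.dirac true + ENNReal.ofReal (1 - r) • Measure.dirac false with hν
  have hνt : ν {true} = ENNReal.ofReal r := by
    simp [hν, Measure.dirac_apply]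
  have hνf : ν {false} = ENNReal.ofReal (1 - r) := by
    simp [hν, Measure.dirac_apply]
  haveI hνP : IsProbabilityMeasure ν := by
    constructor
    simp only [hν, Measure.add_apply, Measure.smul_apply, measure_univ, smul_eq_mul, mul_one]
    rw [← ENNReal.ofReal_add hr0 (by linarith)]
    norm_num
  -- the new events
  set A' : Fin m → Set (Ω₀ × Bool) := fun k =>
    if k = i then Prod.fst ⁻¹' A i ∪ Prod.snd ⁻¹' {true}
    else if k = j then Prod.fst ⁻¹' A j ∩ Prod.snd ⁻¹' {false}
    else Prod.fst ⁻¹' A k with hA'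
  have hA'i : A' i = Prod.fst ⁻¹' A i ∪ Prod.snd ⁻¹' {true} := by simp [hA']
  have hA'j : A' j = Prod.fst ⁻¹' A j ∩ Prod.snd ⁻¹' {false} := by
    simp [hA', hne.symm]
  have hA'o : ∀ k, k ≠ i → k ≠ j → A' k = Prod.fst ⁻¹' A k := by
    intro k h1 h2; simp [hA', h1, h2]
  refine ⟨Ω₀ × Bool, inferInstance, μ.prod ν, inferInstance, A', ?_, ?_, ?_, ?_⟩
  · -- measurability
    intro k
    by_cases h1 : k = i
    · rw [h1, hA'i]
      exact ((hAm i).preimage measurable_fst).union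
        ((measurableSet_singleton true).preimage measurable_snd)
    by_cases h2 : k = j
    · rw [h2, hA'j]
      exact ((hAm j).preimage measurable_fst).inter
        ((measurableSet_singleton false).preimage measurable_snd)
    · rw [hA'o k h1 h2]; exact (hAm k).preimage measurable_fst
  · -- dependency graph
    intro k
    show Indep (MeasurableSpace.generateFrom {A' k})
      (MeasurableSpace.generateFrom (A' '' {l | l ≠ k ∧ ¬ G.Adj k l})) (μ.prod ν)
    have hgle : ∀ S : Set (Fin m), MeasurableSpace.generateFrom (A '' S) ≤ mΩ₀ := by
      intro S
      apply MeasurableSpace.generateFrom_le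
      rintro _ ⟨l, -, rfl⟩; exact hAm l
    have hsle : ∀ l : Fin m, MeasurableSpace.generateFrom {A l} ≤ mΩ₀ := by
      intro l
      apply MeasurableSpace.generateFrom_le
      rintro _ rfl; exact hAm l
    set T : MeasurableSpace (Ω₀ × Bool) := (⊤ : MeasurableSpace Bool).comap Prod.snd with hT
    -- membership helpers
    have memT_t : MeasurableSet[T] (Prod.snd ⁻¹' ({true} : Set Bool)) := ⟨{true}, trivial, rfl⟩
    have memT_f : MeasurableSet[T] (Prod.snd ⁻¹' ({false} : Set Bool)) := ⟨{false}, trivial, rfl⟩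
    by_cases hki : k = i
    · rw [hki]
      have key := (indep_lift μ ν (hgle {l | l ≠ i ∧ ¬G.Adj i l}) (hsle i) (hdep i).symm).symm
      refine indep_of_indep_of_le_right (indep_of_indep_of_le_left key ?_) ?_
      · -- generateFrom {A' i} ≤ comap fst (gen {A i}) ⊔ T
        apply MeasurableSpace.generateFrom_le
        rintro _ rfl
        rw [hA'i]
        exact MeasurableSet.union
          (le_sup_left (a := (MeasurableSpace.generateFrom {A i}).comap Prod.fst) (b := T) _
            ⟨A i, MeasurableSpace.measurableSet_generateFrom rfl, rfl⟩)
          (le_sup_right (a := (MeasurableSpace.generateFrom {A i}).comap Prod.fst) (b := T) _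
            memT_t)
      · -- generateFrom (A' '' S) ≤ comap fst (gen (A '' S))
        apply MeasurableSpace.generateFrom_le
        rintro _ ⟨l, hl, rfl⟩
        have hlj : l ≠ j := by
          rintro rfl; exact hl.2 hij
        rw [hA'o l hl.1 hlj]
        exact ⟨A l, MeasurableSpace.measurableSet_generateFrom ⟨l, hl, rfl⟩, rfl⟩
    by_cases hkj : k = j
    · rw [hkj]
      have key := (indep_lift μ ν (hgle {l | l ≠ j ∧ ¬G.Adj j l}) (hsle j) (hdep j).symm).symm
      refine indep_of_indep_of_le_right (indep_of_indep_of_le_left key ?_) ?_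
      · apply MeasurableSpace.generateFrom_le
        rintro _ rfl
        rw [hA'j]
        exact MeasurableSet.inter
          (le_sup_left (a := (MeasurableSpace.generateFrom {A j}).comap Prod.fst) (b := T) _
            ⟨A j, MeasurableSpace.measurableSet_generateFrom rfl, rfl⟩)
          (le_sup_right (a := (MeasurableSpace.generateFrom {A j}).comap Prod.fst) (b := T) _
            memT_f)
      · apply MeasurableSpace.generateFrom_le
        rintro _ ⟨l, hl, rfl⟩
        have hli : l ≠ i := by
          rintro rfl; exact hl.2 hij.symm
        rw [hA'o l hli hl.1]
        exact ⟨A l, MeasurableSpace.measurableSet_generateFrom ⟨l, hl, rfl⟩, rfl⟩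
    · have key := indep_lift μ ν (hsle k) (hgle {l | l ≠ k ∧ ¬G.Adj k l}) (hdep k)
      refine indep_of_indep_of_le_right (indep_of_indep_of_le_left key ?_) ?_
      · apply MeasurableSpace.generateFrom_le
        rintro _ rfl
        rw [hA'o k hki hkj]
        exact ⟨A k, MeasurableSpace.measurableSet_generateFrom rfl, rfl⟩
      · apply MeasurableSpace.generateFrom_le
        rintro _ ⟨l, hl, rfl⟩
        set mS := (MeasurableSpace.generateFrom
          (A '' {l | l ≠ k ∧ ¬G.Adj k l})).comap (Prod.fst : Ω₀ × Bool → Ω₀) with hmS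
        have hfst : MeasurableSet[mS ⊔ T] (Prod.fst ⁻¹' A l) :=
          le_sup_left (a := mS) (b := T) _
            ⟨A l, MeasurableSpace.measurableSet_generateFrom ⟨l, hl, rfl⟩, rfl⟩
        by_cases hli : l = i
        · subst hli
          rw [hA'i]
          exact hfst.union (le_sup_right (a := mS) (b := T) _ memT_t)
        by_cases hlj : l = j
        · subst hlj
          rw [hA'j]
          exact hfst.inter (le_sup_right (a := mS) (b := T) _ memT_f)
        · rw [hA'o l hli hlj]; exact hfst
  · -- probabilities
    intro k
    by_cases h1 : k = i
    · rw [h1]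
      have hset : A' i = (A i ×ˢ {false}) ∪ (Set.univ ×ˢ {true}) := by
        rw [hA'i]; ext ⟨ω, b⟩; cases b <;> simp
      have hd : Disjoint ((A i) ×ˢ ({false} : Set Bool)) (Set.univ ×ˢ ({true} : Set Bool)) := by
        rw [Set.disjoint_left]
        rintro ⟨ω, b⟩ h1 h2
        simp only [Set.mem_prod, Set.mem_singleton_iff] at h1 h2
        rw [h1.2] at h2; exact Bool.noConfusion h2.2
      rw [hset, measure_union hd (MeasurableSet.univ.prod (measurableSet_singleton true)),
        Measure.prod_prod, Measure.prod_prod, hAp i, hνf, hνt, measure_univ, one_mul,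
        Function.update_self]
      rw [← ENNReal.ofReal_mul (h01 i).1.le, ← ENNReal.ofReal_add (mul_nonneg (h01 i).1.le (by linarith)) hr0]
      congr 1
      rw [hr]
      field_simp
      ring
    by_cases h2 : k = j
    · rw [h2]
      have hset : A' j = (A j) ×ˢ ({false} : Set Bool) := by
        rw [hA'j]; ext ⟨ω, b⟩; simp only [Set.mem_inter_iff, Set.mem_preimage, Set.mem_prod, Set.mem_singleton_iff]
      rw [hset, Measure.prod_prod, hAp j, hνf,
        Function.update_of_ne hne.symm, Function.update_self,
        ← ENNReal.ofReal_mul hpj.le]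
      congr 1
      rw [hr]
      field_simp
    · rw [hA'o k h1 h2, ← Set.prod_univ, Measure.prod_prod, measure_univ, mul_one, hAp k,
        Function.update_of_ne h1, Function.update_of_ne h2]
  · -- union has probability one
    have hsub : Prod.fst ⁻¹' (⋃ k, A k) ⊆ ⋃ k, A' k := by
      rintro ⟨ω, b⟩ hx
      obtain ⟨k, hk⟩ := Set.mem_iUnion.1 hx
      cases b
      · by_cases h1 : k = i
        · exact Set.mem_iUnion.2 ⟨i, by rw [hA'i]; exact Or.inl (h1 ▸ hk)⟩
        by_cases h2 : k = j
        · exact Set.mem_iUnion.2 ⟨j, by rw [hA'j]; exact ⟨h2 ▸ hk, rfl⟩⟩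
        · exact Set.mem_iUnion.2 ⟨k, by rw [hA'o k h1 h2]; exact hk⟩
      · exact Set.mem_iUnion.2 ⟨i, by rw [hA'i]; exact Or.inr rfl⟩
    refine le_antisymm prob_le_one ?_
    calc (1 : ENNReal) = μ.prod ν (Prod.fst ⁻¹' (⋃ k, A k)) := by
          rw [← Set.prod_univ, Measure.prod_prod, measure_univ, mul_one, hAu]
      _ ≤ μ.prod ν (⋃ k, A' k) := measure_mono hsub
end

section
/- Let A_1, …, A_m be events with dependency graph G = ([m], E) and B_1, …, B_m exclusive events with the same dependency graph and Pr(A_i) = Pr(B_i) for all i. Define α(S) = Pr(⋂_{i∈S} Ā_i) and β(S) = Pr(⋂_{i∈S} B̄_i). Then for all S_1 ⊆ S_2 ⊆ [m] with β(S_2) > 0, we have α(S_1)/β(S_1) ≤ α(S_2)/β(S_2) (the ratio α(S)/β(S) is monotone nondecreasing in S). -/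
open MeasureTheory ProbabilityTheory Finset

section Aux

variable {Ω : Type*} [MeasurableSpace Ω] {μ : Measure Ω}
  [IsProbabilityMeasure μ] {m : ℕ} {G : SimpleGraph (Fin m)} {A B : Fin m → Set Ω}

private lemma indep_aux (hdep : IsDependencyGraph μ G A)
    (j : Fin m) (D : Finset (Fin m)) (hD : ∀ i ∈ D, i ≠ j ∧ ¬ G.Adj j i) :
    μ (A j ∩ ⋂ i ∈ D, (A i)ᶜ) = μ (A j) * μ (⋂ i ∈ D, (A i)ᶜ) := by
  have h := (hdep j).indepSet_of_measurableSet (s := A j) (t := ⋂ i ∈ D, (A i)ᶜ)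
    (MeasurableSpace.measurableSet_generateFrom rfl) ?_
  · exact h.measure_inter_eq_mul
  · refine MeasurableSet.biInter D.countable_toSet (fun i hi => ?_)
    have hmem : i ∈ {k | k ≠ j ∧ ¬ G.Adj j k} := ⟨(hD i hi).1, (hD i hi).2⟩
    exact (MeasurableSpace.measurableSet_generateFrom
      (Set.mem_image_of_mem (fun k => A k) hmem)).compl

/-- decomposition: μ(⋂_{insert j S}) + μ(A j ∩ ⋂_S) = μ(⋂_S) -/
private lemma decomp (hAm : ∀ i, MeasurableSet (A i)) (S : Finset (Fin m)) (j : Fin m) :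
    μ (⋂ i ∈ insert j S, (A i)ᶜ) + μ (A j ∩ ⋂ i ∈ S, (A i)ᶜ)
      = μ (⋂ i ∈ S, (A i)ᶜ) := by
  have h := measure_inter_add_diff (μ := μ) (⋂ i ∈ S, (A i)ᶜ) (hAm j).compl
  rw [Finset.set_biInter_insert]
  rw [Set.diff_eq, compl_compl] at h
  rw [← h]
  ring_nf
  rw [Set.inter_comm (A j), Set.inter_comm ((A j)ᶜ)]

private lemma real_aux {a b a' b' a₁ b₁ aD bD p tA tB : ℝ}
    (hb0 : 0 ≤ b) (hp0 : 0 ≤ p) (ha0 : 0 ≤ a) (ha₁0 : 0 ≤ a₁) (hb₁0 : 0 ≤ b₁)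
    (ha'0 : 0 ≤ a') (hb'0 : 0 ≤ b') (htA0 : 0 ≤ tA) (htB0 : 0 ≤ tB)
    (ha' : a' + tA = a) (hb' : b' + tB = b) (htA : tA ≤ p * aD) (htB : tB = p * bD)
    (ihDS : aD * b ≤ a * bD) (ih₁S : a₁ * b ≤ a * b₁) :
    a₁ * b' ≤ a' * b₁ := by
  have hstep : a * b' ≤ a' * b := by nlinarith
  rcases eq_or_lt_of_le ha0 with ha | ha
  · have ha'z : a' = 0 := by nlinarith
    have hab : a₁ * b = 0 := le_antisymm (by nlinarith) (by positivity)
    rcases mul_eq_zero.mp hab with h | h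
    · rw [h, zero_mul, ha'z, zero_mul]
    · have hb'z : b' = 0 := by nlinarith
      rw [hb'z, mul_zero, ha'z, zero_mul]
  rcases eq_or_lt_of_le hb0 with hb | hb
  · have hb'z : b' = 0 := by nlinarith
    rw [hb'z, mul_zero]; positivity
  · have h1 : (a₁ * b') * (a * b) ≤ (a' * b₁) * (a * b) := by
      nlinarith [mul_le_mul ih₁S hstep (mul_nonneg ha0 hb'0) (mul_nonneg ha0 hb₁0)]
    exact le_of_mul_le_mul_right h1 (mul_pos ha hb)

private lemma cross_ineq (hAm : ∀ i, MeasurableSet (A i)) (hBm : ∀ i, MeasurableSet (B i))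
    (hAdep : IsDependencyGraph μ G A) (hBdep : IsDependencyGraph μ G B)
    (heq : ∀ i, μ (A i) = μ (B i))
    (hexcl : ∀ i j, G.Adj i j → μ (B i ∩ B j) = 0) :
    ∀ n (S₂ : Finset (Fin m)), S₂.card ≤ n → ∀ S₁ ⊆ S₂,
      (μ (⋂ i ∈ S₁, (A i)ᶜ)).toReal * (μ (⋂ i ∈ S₂, (B i)ᶜ)).toReal
        ≤ (μ (⋂ i ∈ S₂, (A i)ᶜ)).toReal * (μ (⋂ i ∈ S₁, (B i)ᶜ)).toReal := by
  classical
  intro n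
  induction n with
  | zero =>
    intro S₂ hcard S₁ hsub
    have : S₂ = ∅ := Finset.card_eq_zero.mp (Nat.le_zero.mp hcard)
    subst this
    rw [Finset.subset_empty.mp hsub]
  | succ n IH =>
    intro S₂ hcard S₁ hsub
    rcases eq_or_ne S₁ S₂ with rfl | hne
    · exact le_rfl
    obtain ⟨j, hjS₂, hjS₁⟩ := Finset.exists_of_ssubset (hsub.ssubset_of_ne hne)
    set S := S₂.erase j with hS
    have hjS : j ∉ S := Finset.notMem_erase j S₂
    have hS₂ : S₂ = insert j S := (Finset.insert_erase hjS₂).symm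
    have hScard : S.card ≤ n := by
      have h1 : 1 ≤ S₂.card := Finset.card_pos.mpr ⟨j, hjS₂⟩
      have h2 : S.card = S₂.card - 1 := Finset.card_erase_of_mem hjS₂
      omega
    have hS₁S : S₁ ⊆ S := fun x hx => Finset.mem_erase.mpr
      ⟨fun h => hjS₁ (h ▸ hx), hsub hx⟩
    -- notation
    set a : ℝ := (μ (⋂ i ∈ S, (A i)ᶜ)).toReal
    set b : ℝ := (μ (⋂ i ∈ S, (B i)ᶜ)).toReal
    set a' : ℝ := (μ (⋂ i ∈ insert j S, (A i)ᶜ)).toReal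
    set b' : ℝ := (μ (⋂ i ∈ insert j S, (B i)ᶜ)).toReal
    set a₁ : ℝ := (μ (⋂ i ∈ S₁, (A i)ᶜ)).toReal
    set b₁ : ℝ := (μ (⋂ i ∈ S₁, (B i)ᶜ)).toReal
    set D : Finset (Fin m) := S.filter (fun i => ¬ G.Adj j i) with hD
    have hDS : D ⊆ S := hD ▸ Finset.filter_subset _ _
    have hDprop : ∀ i ∈ D, i ≠ j ∧ ¬ G.Adj j i := by
      intro i hi
      rw [hD, Finset.mem_filter] at hi
      exact ⟨fun h => hjS (h ▸ hi.1), hi.2⟩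
    set aD : ℝ := (μ (⋂ i ∈ D, (A i)ᶜ)).toReal
    set bD : ℝ := (μ (⋂ i ∈ D, (B i)ᶜ)).toReal
    set p : ℝ := (μ (A j)).toReal with hp
    have hpB : (μ (B j)).toReal = p := by rw [hp, heq j]
    -- single step facts
    have hfin : ∀ X : Set Ω, μ X ≠ ⊤ := fun X => measure_ne_top μ X
    -- a' = a - tA
    have hdecompA := decomp (μ := μ) hAm S j
    have ha' : a' + (μ (A j ∩ ⋂ i ∈ S, (A i)ᶜ)).toReal = a := by
      rw [← ENNReal.toReal_add (hfin _) (hfin _), hdecompA]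
    have hdecompB := decomp (μ := μ) hBm S j
    have hb' : b' + (μ (B j ∩ ⋂ i ∈ S, (B i)ᶜ)).toReal = b := by
      rw [← ENNReal.toReal_add (hfin _) (hfin _), hdecompB]
    -- tA ≤ p * aD
    have htA : (μ (A j ∩ ⋂ i ∈ S, (A i)ᶜ)).toReal ≤ p * aD := by
      have hmono : μ (A j ∩ ⋂ i ∈ S, (A i)ᶜ) ≤ μ (A j ∩ ⋂ i ∈ D, (A i)ᶜ) := by
        refine measure_mono (Set.inter_subset_inter_right _ ?_)
        exact Set.biInter_subset_biInter_left (by exact_mod_cast hDS)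
      have hind := indep_aux hAdep j D hDprop
      calc (μ (A j ∩ ⋂ i ∈ S, (A i)ᶜ)).toReal
          ≤ (μ (A j ∩ ⋂ i ∈ D, (A i)ᶜ)).toReal :=
            ENNReal.toReal_mono (hfin _) hmono
        _ = p * aD := by rw [hind, ENNReal.toReal_mul]
    -- tB = p * bD
    have htB : (μ (B j ∩ ⋂ i ∈ S, (B i)ᶜ)).toReal = p * bD := by
      have hkey : μ (B j ∩ ⋂ i ∈ S, (B i)ᶜ) = μ (B j ∩ ⋂ i ∈ D, (B i)ᶜ) := by
        refine le_antisymm (measure_mono (Set.inter_subset_inter_right _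
          (Set.biInter_subset_biInter_left (by exact_mod_cast hDS)))) ?_
        have hnull : μ ((B j ∩ ⋂ i ∈ D, (B i)ᶜ) \ (B j ∩ ⋂ i ∈ S, (B i)ᶜ)) = 0 := by
          refine measure_mono_null (t := ⋃ i ∈ S \ D, B j ∩ B i) ?_ ?_
          · rintro x ⟨⟨hxj, hxD⟩, hxnot⟩
            simp only [Set.mem_iInter, Set.mem_compl_iff] at hxD
            have : ∃ i ∈ S, x ∈ B i := by
              by_contra hcon
              push_neg at hcon
              exact hxnot ⟨hxj, Set.mem_iInter₂.mpr (fun i hi => hcon i hi)⟩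
            obtain ⟨i, hiS, hxi⟩ := this
            have hiD : i ∉ D := fun h => hxD i h hxi
            exact Set.mem_biUnion (Finset.mem_sdiff.mpr ⟨hiS, hiD⟩) ⟨hxj, hxi⟩
          · refine (measure_biUnion_null_iff (S \ D : Finset (Fin m)).countable_toSet).mpr ?_
            intro i hi
            rw [Finset.mem_coe, Finset.mem_sdiff, hD, Finset.mem_filter] at hi
            have hadj : G.Adj j i := by
              by_contra hcon
              exact hi.2 ⟨hi.1, hcon⟩
            exact hexcl j i hadj
        calc μ (B j ∩ ⋂ i ∈ D, (B i)ᶜ)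
            ≤ μ (B j ∩ ⋂ i ∈ S, (B i)ᶜ)
              + μ ((B j ∩ ⋂ i ∈ D, (B i)ᶜ) \ (B j ∩ ⋂ i ∈ S, (B i)ᶜ)) := by
              refine le_trans (measure_mono ?_) (measure_union_le _ _)
              intro x hx
              by_cases h : x ∈ B j ∩ ⋂ i ∈ S, (B i)ᶜ
              · exact Or.inl h
              · exact Or.inr ⟨hx, h⟩
          _ = μ (B j ∩ ⋂ i ∈ S, (B i)ᶜ) := by rw [hnull, add_zero]
      rw [hkey, indep_aux hBdep j D hDprop, ENNReal.toReal_mul, hpB]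
    rw [hS₂]
    exact real_aux ENNReal.toReal_nonneg ENNReal.toReal_nonneg ENNReal.toReal_nonneg
      ENNReal.toReal_nonneg ENNReal.toReal_nonneg ENNReal.toReal_nonneg ENNReal.toReal_nonneg
      ENNReal.toReal_nonneg ENNReal.toReal_nonneg ha' hb' htA htB
      (IH S hScard D hDS) (IH S hScard S₁ hS₁S)

end Aux

theorem ratio_monotone {Ω : Type*} [MeasurableSpace Ω] (μ : Measure Ω)
    [IsProbabilityMeasure μ] {m : ℕ} (G : SimpleGraph (Fin m))
    (A B : Fin m → Set Ω)
    (hAm : ∀ i, MeasurableSet (A i)) (hBm : ∀ i, MeasurableSet (B i))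
    (hAdep : IsDependencyGraph μ G A) (hBdep : IsDependencyGraph μ G B)
    (heq : ∀ i, μ (A i) = μ (B i))
    (hexcl : ∀ i j, G.Adj i j → μ (B i ∩ B j) = 0)
    (S₁ S₂ : Finset (Fin m)) (hsub : S₁ ⊆ S₂)
    (hβ : 0 < (μ (⋂ i ∈ S₂, (B i)ᶜ)).toReal) :
    (μ (⋂ i ∈ S₁, (A i)ᶜ)).toReal / (μ (⋂ i ∈ S₁, (B i)ᶜ)).toReal
      ≤ (μ (⋂ i ∈ S₂, (A i)ᶜ)).toReal / (μ (⋂ i ∈ S₂, (B i)ᶜ)).toReal := by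
  have hcross := cross_ineq hAm hBm hAdep hBdep heq hexcl S₂.card S₂ le_rfl S₁ hsub
  have hβ₁ : 0 < (μ (⋂ i ∈ S₁, (B i)ᶜ)).toReal := by
    refine lt_of_lt_of_le hβ (ENNReal.toReal_mono (measure_ne_top μ _) ?_)
    exact measure_mono (Set.biInter_subset_biInter_left (by exact_mod_cast hsub))
  rw [div_le_div_iff₀ hβ₁ hβ]
  exact hcross
end

section
/- Let V ⊆ H be a subspace of a finite-dimensional complex Hilbert space H = H_1 ⊗ ⋯ ⊗ H_n spanned by computational-basis vectors, and suppose V can be written as a direct sum ⊕_k X_k with each X_k also spanned by basis vectors. Then for two commuting basis-diagonal subspaces V_i = ⊕_k X_{ijk} and V_j = ⊕_k X_{jik} such that X_{ijk} and X_{jik} are relatively independent inside the slice Y_{ijk} (i.e., R(X_{ijk} ∩ X_{jik} | Y_{ijk}) = R(X_{ijk}|Y_{ijk})·R(X_{jik}|Y_{ijk})) and the Y_{ijk} are orthogonal with ⊕_k Y_{ijk} = H, we have R(V_i ∩ V_j) ≥ (Σ_k min{R(X_{ijk}), R(X_{jik})})². -/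
/-!
The slices `Y k` are orthogonal, hence independent, so `dim H = ∑ dim Y k`, and the pieces
`X k ⊓ X' k` (each inside its own slice) are independent as well, so their sum is a subspace of
`(⨆ X) ⊓ (⨆ X')` of dimension `∑ dim (X k ⊓ X' k)`. Relative independence gives
`dim (X k ⊓ X' k) = dim X k · dim X' k / dim Y k ≥ m_k² / dim Y k` with `m_k = min (dim X k) (dim X' k)`,
and Sedrakyan's form of Cauchy–Schwarz bounds `∑ m_k² / dim Y k` below by `(∑ m_k)² / dim H`.
-/

open Module Finset

theorem iSupIndep_of_inner_eq_zero {𝕜 E ι : Type*} [RCLike 𝕜] [NormedAddCommGroup E]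
    [InnerProductSpace 𝕜 E] {V : ι → Submodule 𝕜 E}
    (h : ∀ i j, i ≠ j → ∀ v ∈ V i, ∀ w ∈ V j, (inner 𝕜 v w : 𝕜) = 0) : iSupIndep V :=
  OrthogonalFamily.independent fun i j hij v w => h i j hij v v.2 w w.2

namespace Submodule

variable {K V ι : Type*} [DivisionRing K] [AddCommGroup V] [Module K V] [FiniteDimensional K V]

theorem finrank_finsetSup_eq_sum {p : ι → Submodule K V} (hp : iSupIndep p) (s : Finset ι) :
    finrank K ↥(s.sup p) = ∑ i ∈ s, finrank K ↥(p i) := by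
  classical
  induction s using Finset.induction with
  | empty => simp
  | @insert a s ha ih =>
    have hdisj : Disjoint (p a) (s.sup p) := by
      rw [Finset.sup_eq_iSup]
      exact hp.disjoint_biSup ha
    have h := finrank_sup_add_finrank_inf_eq (p a) (s.sup p)
    rw [hdisj.eq_bot, finrank_bot, add_zero] at h
    rw [Finset.sup_insert, Finset.sum_insert ha, ← ih, h]

theorem finrank_iSup_eq_sum [Fintype ι] {p : ι → Submodule K V} (hp : iSupIndep p) :
    finrank K ↥(⨆ i, p i) = ∑ i, finrank K ↥(p i) := by
  rw [← Finset.sup_univ_eq_iSup, finrank_finsetSup_eq_sum hp]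

theorem sum_finrank_inf_le_finrank_iSup_inf [Fintype ι] {p q : ι → Submodule K V}
    (h : iSupIndep fun i => p i ⊓ q i) :
    ∑ i, finrank K ↥(p i ⊓ q i) ≤ finrank K ↥((⨆ i, p i) ⊓ ⨆ i, q i) := by
  rw [← finrank_iSup_eq_sum h]
  exact finrank_mono (le_inf (iSup_mono fun i => inf_le_left) (iSup_mono fun i => inf_le_right))

end Submodule

theorem min_sq_div_le_of_mul_eq {α : Type*} [Field α] [LinearOrder α] [IsStrictOrderedRing α]
    {a b c y : α} (ha : 0 ≤ a) (hb : 0 ≤ b) (hy : 0 < y) (h : c * y = a * b) :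
    min a b ^ 2 / y ≤ c := by
  rw [div_le_iff₀ hy, h, sq]
  exact mul_le_mul (min_le_left a b) (min_le_right a b) (le_min ha hb) ha

theorem relDim_inter_ge_sq_sum_min_general {H : Type*} [NormedAddCommGroup H]
    [InnerProductSpace ℂ H] [FiniteDimensional ℂ H]
    {K : ℕ} (Y X X' : Fin K → Submodule ℂ H)
    (hXY : ∀ k, X k ≤ Y k)
    -- the slices Y k are pairwise orthogonal and span H
    (horth : ∀ k l, k ≠ l → ∀ v ∈ Y k, ∀ w ∈ Y l, (inner ℂ v w : ℂ) = 0)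
    (hsup : (⨆ k, Y k) = ⊤)
    (hYpos : ∀ k, 0 < finrank ℂ (Y k))
    -- inside each slice, X k and X' k are relatively independent:
    -- R(X k ⊓ X' k | Y k) = R(X k | Y k) · R(X' k | Y k)
    (hindep : ∀ k, (finrank ℂ ↥(X k ⊓ X' k) : ℝ) * finrank ℂ (Y k)
      = (finrank ℂ (X k) : ℝ) * finrank ℂ (X' k)) :
    (∑ k, min ((finrank ℂ (X k) : ℝ) / finrank ℂ H)
        ((finrank ℂ (X' k) : ℝ) / finrank ℂ H)) ^ 2
      ≤ (finrank ℂ ↥((⨆ k, X k) ⊓ (⨆ k, X' k)) : ℝ) / finrank ℂ H := by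
  have hYind : iSupIndep Y := iSupIndep_of_inner_eq_zero horth
  have hdimH : (finrank ℂ H : ℝ) = ∑ k, (finrank ℂ (Y k) : ℝ) := by
    rw [← finrank_top ℂ H, ← hsup, Submodule.finrank_iSup_eq_sum hYind]
    push_cast
    rfl
  simp only [min_div_div_right (Nat.cast_nonneg (finrank ℂ H)), ← sum_div, div_pow, sq
    (finrank ℂ H : ℝ), ← div_div]
  refine div_le_div_of_nonneg_right ?_ (Nat.cast_nonneg _)
  calc (∑ k, min (finrank ℂ (X k) : ℝ) (finrank ℂ (X' k))) ^ 2 / finrank ℂ H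
      ≤ ∑ k, min (finrank ℂ (X k) : ℝ) (finrank ℂ (X' k)) ^ 2 / finrank ℂ (Y k) := by
        rw [hdimH]
        exact sq_sum_div_le_sum_sq_div _ _ fun k _ => Nat.cast_pos.mpr (hYpos k)
    _ ≤ ∑ k, (finrank ℂ ↥(X k ⊓ X' k) : ℝ) :=
        sum_le_sum fun k _ => min_sq_div_le_of_mul_eq (Nat.cast_nonneg _) (Nat.cast_nonneg _)
          (Nat.cast_pos.mpr (hYpos k)) (hindep k)
    _ ≤ finrank ℂ ↥((⨆ k, X k) ⊓ (⨆ k, X' k)) := by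
        exact_mod_cast Submodule.sum_finrank_inf_le_finrank_iSup_inf
          (hYind.mono fun k => inf_le_left.trans (hXY k))

theorem relDim_inter_ge_sq_sum_min {H : Type*} [NormedAddCommGroup H]
    [InnerProductSpace ℂ H] [FiniteDimensional ℂ H] (hH : 0 < finrank ℂ H)
    {K : ℕ} (Y X X' : Fin K → Submodule ℂ H)
    (hXY : ∀ k, X k ≤ Y k) (hX'Y : ∀ k, X' k ≤ Y k)
    -- the slices Y k are pairwise orthogonal and span H
    (horth : ∀ k l, k ≠ l → ∀ v ∈ Y k, ∀ w ∈ Y l, (inner ℂ v w : ℂ) = 0)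
    (hsup : (⨆ k, Y k) = ⊤)
    (hYpos : ∀ k, 0 < finrank ℂ (Y k))
    -- inside each slice, X k and X' k are relatively independent:
    -- R(X k ⊓ X' k | Y k) = R(X k | Y k) · R(X' k | Y k)
    (hindep : ∀ k, (finrank ℂ ↥(X k ⊓ X' k) : ℝ) * finrank ℂ (Y k)
      = (finrank ℂ (X k) : ℝ) * finrank ℂ (X' k)) :
    (∑ k, min ((finrank ℂ (X k) : ℝ) / finrank ℂ H)
        ((finrank ℂ (X' k) : ℝ) / finrank ℂ H)) ^ 2
      ≤ (finrank ℂ ↥((⨆ k, X k) ⊓ (⨆ k, X' k)) : ℝ) / finrank ℂ H :=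
  relDim_inter_ge_sq_sum_min_general Y X X' hXY horth hsup hYpos hindep
end

section
/- Given a Hilbert space H = H_1 ⊗ ⋯ ⊗ H_n with dim H_j = d_j, suppose there exists a family of subspaces V_1, …, V_m with V_i = V_i^{loc} ⊗ H_{[n]\N(i)} (each V_i^{loc} ⊆ H_{N(i)}) of relative dimensions r_1, …, r_m whose sum is all of H. Then for any dimension vector d' with each d'_j a multiple of d_j, there exist subspaces V'_1, …, V'_m of the same form (conforming to the same bipartite graph, with the same relative dimensions r_i) on qudits of dimensions d' whose sum is the whole space. -/
open Module

/-!
Index the coordinates of an enlarged qudit `Fin (d' j) ≃ Fin (d' j / d j) × Fin (d j)` by a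
slice and an old coordinate. The new subspaces consist of the functions each of whose slices,
obtained by fixing the slice indices of all qudits, lies in the old subspace: a direct sum of
`∏ j, d' j / d j` copies of it, so relative dimensions are preserved and the sum is still
everything. The slice indices of the qudits outside `N(i)` merge with their old coordinates into
the new outer coordinates, which keeps the new family conforming.
-/

/-- `V` conforms to the qudit neighborhood `N`: viewing `(∀ j, Fin (d j)) → ℂ` as the tensor
product of the qudits `ℂ^{d j}`, `V` has the form `W ⊗ (full space on the other qudits)`,
i.e. there is a subspace `W` of the function space on the coordinates in `N` such that `V`
consists exactly of those functions all of whose slices (obtained by fixing the coordinates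
outside `N`) lie in `W`. -/
def Conforms {n : ℕ} (d : Fin n → ℕ) (N : Finset (Fin n))
    (V : Submodule ℂ ((∀ j, Fin (d j)) → ℂ)) : Prop :=
  ∃ W : Submodule ℂ ((∀ j : {j // j ∈ N}, Fin (d j.1)) → ℂ),
    ∀ f, f ∈ V ↔ ∀ y : ∀ j : {j // j ∉ N}, Fin (d j.1),
      (fun x : ∀ j : {j // j ∈ N}, Fin (d j.1) =>
        f (fun j => if h : j ∈ N then x ⟨j, h⟩ else y ⟨j, h⟩)) ∈ W

section Slices

variable {K S T X Y Z : Type*}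

section CommSemiring

variable [CommSemiring K]

def sliceSubmodule (g : S → X → Y) (W : Submodule K (X → K)) : Submodule K (Y → K) :=
  ⨅ s, W.comap (LinearMap.funLeft K K (g s))

@[simp]
theorem mem_sliceSubmodule {g : S → X → Y} {W : Submodule K (X → K)} {f : Y → K} :
    f ∈ sliceSubmodule g W ↔ ∀ s, f ∘ g s ∈ W := by
  simp [sliceSubmodule, LinearMap.funLeft]

theorem sliceSubmodule_sliceSubmodule (g : S → X → Y) (h : T → Z → X) (W : Submodule K (Z → K)) :
    sliceSubmodule g (sliceSubmodule h W) = sliceSubmodule (fun p : S × T => g p.1 ∘ h p.2) W := by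
  ext f
  simp [Prod.forall, Function.comp_assoc]

theorem sliceSubmodule_comp_of_surjective {σ : T → S} (hσ : σ.Surjective) (g : S → X → Y)
    (W : Submodule K (X → K)) : sliceSubmodule (g ∘ σ) W = sliceSubmodule g W := by
  ext f
  simp [hσ.forall]

theorem sliceSubmodule_curry_eq_comap (β : S × X ≃ Y) (W : Submodule K (X → K)) :
    sliceSubmodule (Function.curry β) W = (Submodule.pi Set.univ fun _ : S => W).comap
      ((LinearEquiv.funCongrLeft K K β).trans (LinearEquiv.curry K K S X)).toLinearMap := by
  ext f
  simp only [mem_sliceSubmodule, Submodule.mem_comap, Submodule.mem_pi, Set.mem_univ,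
    true_implies]
  rfl

theorem iSup_pi_univ_const [Finite S] {ι : Sort*} (W : ι → Submodule K (X → K)) :
    ⨆ i, Submodule.pi Set.univ (fun _ : S => W i) = Submodule.pi Set.univ fun _ => ⨆ i, W i := by
  classical
  refine le_antisymm (iSup_le fun i => Submodule.pi_mono fun _ _ => le_iSup W i) ?_
  rw [← Submodule.iSup_map_single]
  refine iSup_le fun s => ?_
  rw [Submodule.map_iSup]
  exact iSup_mono fun i =>
    Submodule.map_le_iff_le_comap.mpr (Submodule.le_comap_single_pi fun _ : S => W i)

theorem iSup_sliceSubmodule_curry_eq_top [Finite S] {ι : Sort*} (β : S × X ≃ Y)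
    {W : ι → Submodule K (X → K)} (hW : ⨆ i, W i = ⊤) :
    ⨆ i, sliceSubmodule (Function.curry β) (W i) = ⊤ := by
  simp only [sliceSubmodule_curry_eq_comap, Submodule.comap_equiv_eq_map_symm,
    ← Submodule.map_iSup, iSup_pi_univ_const, hW, Submodule.pi_top, Submodule.map_top]
  exact LinearEquiv.range _

end CommSemiring

theorem finrank_pi_univ_const [Field K] [Fintype S] {M : Type*} [AddCommGroup M] [Module K M]
    (W : Submodule K M) [FiniteDimensional K W] :
    finrank K (Submodule.pi Set.univ fun _ : S => W) = Fintype.card S * finrank K W := by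
  have hrange := LinearMap.range_compLeft W.subtype S
  rw [W.range_subtype] at hrange
  rw [← hrange, LinearMap.finrank_range_of_inj, Module.finrank_pi_fintype]
  · simp
  · exact W.injective_subtype.comp_left

theorem finrank_sliceSubmodule_curry [Field K] [Fintype S] [Finite X] (β : S × X ≃ Y)
    (W : Submodule K (X → K)) :
    finrank K (sliceSubmodule (Function.curry β) W) = Fintype.card S * finrank K W := by
  rw [sliceSubmodule_curry_eq_comap, Submodule.comap_equiv_eq_map_symm,
    LinearEquiv.finrank_map_eq, finrank_pi_univ_const]

end Slices

def piBlockEquiv {ι : Type*} {α β γ : ι → Type*} (e : ∀ i, γ i ≃ α i × β i) :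
    (∀ i, α i) × (∀ i, β i) ≃ ∀ i, γ i :=
  (Equiv.arrowProdEquivProdArrow ι α β).symm.trans (Equiv.piCongrRight fun i => (e i).symm)

theorem conforms_iff_exists_eq_sliceSubmodule {n : ℕ} {d : Fin n → ℕ} {N : Finset (Fin n)}
    {V : Submodule ℂ ((∀ j, Fin (d j)) → ℂ)} :
    Conforms d N V ↔ ∃ W, V = sliceSubmodule
      (fun y x => (Equiv.piEquivPiSubtypeProd (· ∈ N) (fun j => Fin (d j))).symm (x, y)) W := by
  simp only [Conforms, SetLike.ext_iff, mem_sliceSubmodule]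
  rfl

theorem Conforms.sliceSubmodule_piBlockEquiv {n : ℕ} {k d d' : Fin n → ℕ}
    (e : ∀ j, Fin (d' j) ≃ Fin (k j) × Fin (d j)) {N : Finset (Fin n)}
    {V : Submodule ℂ ((∀ j, Fin (d j)) → ℂ)} (hV : Conforms d N V) :
    Conforms d' N (sliceSubmodule (Function.curry (piBlockEquiv e)) V) := by
  rw [conforms_iff_exists_eq_sliceSubmodule] at hV ⊢
  obtain ⟨W, rfl⟩ := hV
  refine ⟨sliceSubmodule (Function.curry (piBlockEquiv fun j : {j // j ∈ N} => e j)) W, ?_⟩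
  -- `σ (s, y)` merges `s` and `y` off `N` into a new outer coordinate and keeps `s` on `N`.
  let σ := ((Equiv.piEquivPiSubtypeProd (· ∈ N) (fun j => Fin (k j))).prodCongr
      (Equiv.refl _)).trans ((Equiv.prodAssoc _ _ _).trans ((Equiv.prodCongr (Equiv.refl _)
      (piBlockEquiv fun j : {j // j ∉ N} => e j)).trans (Equiv.prodComm _ _)))
  rw [sliceSubmodule_sliceSubmodule, sliceSubmodule_sliceSubmodule,
    ← sliceSubmodule_comp_of_surjective σ.surjective]
  congr 1
  funext p x j
  by_cases hj : j ∈ N <;> simp [σ, piBlockEquiv, hj]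

theorem spanning_family_of_multiple_dims_general {m n : ℕ} (vbl : Fin m → Finset (Fin n))
    (d d' : Fin n → ℕ)
    (hdvd : ∀ j, d j ∣ d' j) (r : Fin m → ℝ)
    (V : Fin m → Submodule ℂ ((∀ j, Fin (d j)) → ℂ))
    (hconf : ∀ i, Conforms d (vbl i) (V i))
    (hrank : ∀ i, (finrank ℂ (V i) : ℝ) = r i * ∏ j, (d j : ℝ))
    (hspan : (⨆ i, V i) = ⊤) :
    ∃ V' : Fin m → Submodule ℂ ((∀ j, Fin (d' j)) → ℂ),
      (∀ i, Conforms d' (vbl i) (V' i)) ∧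
      (∀ i, (finrank ℂ (V' i) : ℝ) = r i * ∏ j, (d' j : ℝ)) ∧
      (⨆ i, V' i) = ⊤ := by
  have hdiv : ∀ j, d' j / d j * d j = d' j := fun j => Nat.div_mul_cancel (hdvd j)
  let e : ∀ j, Fin (d' j) ≃ Fin (d' j / d j) × Fin (d j) :=
    fun j => (finCongr (hdiv j)).symm.trans finProdFinEquiv.symm
  refine ⟨fun i => sliceSubmodule (Function.curry (piBlockEquiv e)) (V i),
    fun i => (hconf i).sliceSubmodule_piBlockEquiv e, fun i => ?_,
    iSup_sliceSubmodule_curry_eq_top _ hspan⟩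
  have hprod : ∏ j, (d' j : ℝ) = (∏ j, ((d' j / d j : ℕ) : ℝ)) * ∏ j, (d j : ℝ) := by
    rw [← Finset.prod_mul_distrib]
    exact Finset.prod_congr rfl fun j _ => by exact_mod_cast (hdiv j).symm
  rw [finrank_sliceSubmodule_curry, Fintype.card_pi, Nat.cast_mul, hrank i, hprod]
  simp only [Fintype.card_fin, Nat.cast_prod]
  ring

theorem spanning_family_of_multiple_dims {m n : ℕ} (vbl : Fin m → Finset (Fin n))
    (d d' : Fin n → ℕ) (hd : ∀ j, 0 < d j) (hd' : ∀ j, 0 < d' j)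
    (hdvd : ∀ j, d j ∣ d' j) (r : Fin m → ℝ)
    (V : Fin m → Submodule ℂ ((∀ j, Fin (d j)) → ℂ))
    (hconf : ∀ i, Conforms d (vbl i) (V i))
    (hrank : ∀ i, (finrank ℂ (V i) : ℝ) = r i * ∏ j, (d j : ℝ))
    (hspan : (⨆ i, V i) = ⊤) :
    ∃ V' : Fin m → Submodule ℂ ((∀ j, Fin (d' j)) → ℂ),
      (∀ i, Conforms d' (vbl i) (V' i)) ∧
      (∀ i, (finrank ℂ (V' i) : ℝ) = r i * ∏ j, (d' j : ℝ)) ∧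
      (⨆ i, V' i) = ⊤ :=
  spanning_family_of_multiple_dims_general vbl d d' hdvd r V hconf hrank hspan
end
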